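/- The cubic form F(x₀,x₁,x₂) = -6x₀x₁x₂ + 3x₀x₂² - 2x₁³ + 6x₁²x₂ - 3x₁x₂² over an algebraically closed field K of characteristic zero is not a product of three linear forms. -/

import Mathlib

/-!
On the line `x₂ = 0` the cubic restricts to `-2x₁³`. Dehomogenizing with `x₁ = 1`, a
factorization into linear forms `aᵢx₀ + bᵢx₁ + cᵢx₂` becomes a factorization of the
nonzero constant `-2` into the polynomials `aᵢx₀ + bᵢ`, which are therefore units, so
every `aᵢ` vanishes. Then the product does not depend on `x₀`, whereas the cubic takes
the value `3` at `(1, 0, 1)` and `0` at `(0, 0, 1)`.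
-/

open MvPolynomial

theorem MvPolynomial.IsHomogeneous.exists_eq_sum_C_mul_X {σ R : Type*} [Fintype σ]
    [CommSemiring R] {φ : MvPolynomial σ R} (h : φ.IsHomogeneous 1) :
    ∃ c : σ → R, φ = ∑ i, C (c i) * X i := by
  refine ⟨fun i ↦ coeff 0 (pderiv i φ), ?_⟩
  have hconst (i : σ) : pderiv i φ = C (coeff 0 (pderiv i φ)) :=
    totalDegree_eq_zero_iff_eq_C.mp <| (totalDegree_zero_iff_isHomogeneous σ).mpr h.pderiv
  conv_lhs => rw [← one_smul ℕ φ, ← h.sum_X_mul_pderiv]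
  exact Finset.sum_congr rfl fun i _ ↦ by rw [hconst i, mul_comm]

namespace Polynomial

variable {R : Type*} [CommRing R] [IsDomain R]

theorem eq_zero_of_isUnit_C_mul_X_add_C {a b : R} (h : IsUnit (C a * X + C b)) : a = 0 := by
  simpa using congrArg (coeff · 1) (eq_C_of_natDegree_eq_zero (natDegree_eq_zero_of_isUnit h))

theorem eq_zero_of_C_mul_X_add_C_mul_mul_eq_C {a₀ a₁ b₀ b₁ c₀ c₁ r : R} (hr : IsUnit r)
    (h : (C a₀ * X + C a₁) * (C b₀ * X + C b₁) * (C c₀ * X + C c₁) = C r) :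
    a₀ = 0 ∧ b₀ = 0 ∧ c₀ = 0 := by
  have hunit := h ▸ isUnit_C.mpr hr
  simp only [IsUnit.mul_iff] at hunit
  exact ⟨eq_zero_of_isUnit_C_mul_X_add_C hunit.1.1, eq_zero_of_isUnit_C_mul_X_add_C hunit.1.2,
    eq_zero_of_isUnit_C_mul_X_add_C hunit.2⟩

end Polynomial

theorem stmt_12_general {K : Type*} [Field K] [CharZero K] :
    ¬ ∃ L₁ L₂ L₃ : MvPolynomial (Fin 3) K,
        L₁.IsHomogeneous 1 ∧ L₂.IsHomogeneous 1 ∧ L₃.IsHomogeneous 1 ∧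
        (-6 * X 0 * X 1 * X 2 + 3 * X 0 * X 2 ^ 2 - 2 * X 1 ^ 3
            + 6 * X 1 ^ 2 * X 2 - 3 * X 1 * X 2 ^ 2 : MvPolynomial (Fin 3) K)
          = L₁ * L₂ * L₃ := by
  rintro ⟨L₁, L₂, L₃, h₁, h₂, h₃, hF⟩
  obtain ⟨a, hL₁⟩ := h₁.exists_eq_sum_C_mul_X
  obtain ⟨b, hL₂⟩ := h₂.exists_eq_sum_C_mul_X
  obtain ⟨c, hL₃⟩ := h₃.exists_eq_sum_C_mul_X
  have hline : (Polynomial.C (a 0) * Polynomial.X + Polynomial.C (a 1))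
      * (Polynomial.C (b 0) * Polynomial.X + Polynomial.C (b 1))
      * (Polynomial.C (c 0) * Polynomial.X + Polynomial.C (c 1)) = Polynomial.C (-2 : K) := by
    simpa [hL₁, hL₂, hL₃, Fin.sum_univ_three, Polynomial.C_ofNat] using
      (congrArg (aeval ![(Polynomial.X : Polynomial K), 1, 0]) hF).symm
  obtain ⟨ha, hb, hc⟩ := Polynomial.eq_zero_of_C_mul_X_add_C_mul_mul_eq_C
    (by norm_num : (-2 : K) ≠ 0).isUnit hline
  have hconst : eval ![1, 0, 1] (L₁ * L₂ * L₃) = eval ![0, 0, 1] (L₁ * L₂ * L₃) := by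
    simp [hL₁, hL₂, hL₃, Fin.sum_univ_three, ha, hb, hc]
  rw [← hF] at hconst
  simp at hconst

/-- The cubic form `-6x₀x₁x₂ + 3x₀x₂² - 2x₁³ + 6x₁²x₂ - 3x₁x₂²` over an
algebraically closed field of characteristic zero is not a product of three
linear forms. -/
theorem stmt_12 {K : Type*} [Field K] [IsAlgClosed K] [CharZero K] :
    ¬ ∃ L₁ L₂ L₃ : MvPolynomial (Fin 3) K,
        L₁.IsHomogeneous 1 ∧ L₂.IsHomogeneous 1 ∧ L₃.IsHomogeneous 1 ∧
        (-6 * X 0 * X 1 * X 2 + 3 * X 0 * X 2 ^ 2 - 2 * X 1 ^ 3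
            + 6 * X 1 ^ 2 * X 2 - 3 * X 1 * X 2 ^ 2 : MvPolynomial (Fin 3) K)
          = L₁ * L₂ * L₃ :=
  stmt_12_general
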